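/- Let (X,Y) be a pair of discrete random variables with joint pmf p_{X,Y}, marginal pmf p_X of X and conditional pmfs p_{Y|X=x}, and let (X̃,Ỹ) similarly have joint pmf p_{X̃,Ỹ}, marginal p_{X̃} and conditionals p_{Ỹ|X̃=x}. If p_X = p_{X̃} and p_{Y|X=x} is majorized by p_{Ỹ|X̃=x} for every x (p_{Y|X=x} ⪯ p_{Ỹ|X̃=x}), then p_{X,Y} is majorized by p_{X̃,Ỹ} (p_{X,Y} ⪯ p_{X̃,Ỹ}). -/

import Mathlib

open scoped ENNReal Classical
open Filter

namespace MEC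

/-- A probability mass function on `α`: (nonnegative) masses summing to `1`. -/
def IsPMF {α : Type*} (p : α → ℝ≥0∞) : Prop := ∑' x, p x = 1

/-- `p` is an aggregation of `q`, written `q ⊑ p`: there is a map `g` sending the support of
`q` into the support of `p` such that `p` is the pushforward of `q` under `g`. -/
def Agg {α β : Type*} (q : α → ℝ≥0∞) (p : β → ℝ≥0∞) : Prop :=
  ∃ g : α → β, (∀ x, q x ≠ 0 → p (g x) ≠ 0) ∧
    ∀ y, p y = ∑' x, if g x = y then q x else 0

/-- Sum of the `k` largest masses of `p`, i.e. `max_{A, |A| ≤ k} p(A)`. -/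
noncomputable def topk {α : Type*} (p : α → ℝ≥0∞) (k : ℕ) : ℝ≥0∞ :=
  ⨆ (A : Finset α) (_ : A.card ≤ k), ∑ x ∈ A, p x

/-- `q` is majorized by `p`, written `q ⪯ p`: for every `k`, the sum of the `k` largest
masses of `q` is at most the sum of the `k` largest masses of `p`. -/
def Majorized {α β : Type*} (q : α → ℝ≥0∞) (p : β → ℝ≥0∞) : Prop :=
  ∀ k : ℕ, topk q k ≤ topk p k

/-- Product pmf `(q × r)(x,z) = q(x) · r(z)`. -/
noncomputable def prodFun {α β : Type*} (q : α → ℝ≥0∞) (r : β → ℝ≥0∞) : α × β → ℝ≥0∞ :=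
  fun z => q z.1 * r z.2

/-- `Geom_{1/2}` on `ℕ+ = {1,2,3,...}`, with mass `2^{-x}` at `x`. -/
noncomputable def geomHalf : ℕ+ → ℝ≥0∞ := fun x => 2⁻¹ ^ (x : ℕ)

/-- Capped geometric distribution `CGeom_{1/2,k}` on `{1,...,k} ⊆ ℕ+`. -/
noncomputable def cgeomHalf (k : ℕ) : ℕ+ → ℝ≥0∞ := fun x =>
  if (x : ℕ) < k then 2⁻¹ ^ (x : ℕ) else if (x : ℕ) = k then 2⁻¹ ^ (k - 1) else 0

/-- `inf_{p ∈ S} max_{A ⊆ supp(p), |A| ≤ k} p(A)`. -/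
noncomputable def infTopk {α : Type*} (S : Set (α → ℝ≥0∞)) (k : ℕ) : ℝ≥0∞ :=
  ⨅ p ∈ S, topk p k

/-- The greatest lower bound `⋀S` of `S` with respect to majorization, as a pmf on
`ℕ+ = {1,2,...}`, with `(⋀S)(k) = inf_{p∈S} max_{|A|≤k} p(A) − inf_{p∈S} max_{|A|≤k−1} p(A)`. -/
noncomputable def glb {α : Type*} (S : Set (α → ℝ≥0∞)) : ℕ+ → ℝ≥0∞ :=
  fun k => infTopk S (k : ℕ) - infTopk S ((k : ℕ) - 1)

/-- Condition for the existence of `⋀S`: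
`lim_{k→∞} inf_{p∈S} max_{A⊆supp(p), |A|≤k} p(A) = 1`. -/
def GlbExists {α : Type*} (S : Set (α → ℝ≥0∞)) : Prop :=
  Tendsto (fun k => infTopk S k) atTop (nhds 1)

/-- Base-2 logarithm on `ℝ≥0∞` (intended for arguments in `[1,∞]`). -/
noncomputable def log2 (x : ℝ≥0∞) : ℝ≥0∞ :=
  if x = ∞ then ∞ else ENNReal.ofReal (Real.logb 2 x.toReal)

/-- Shannon entropy (base 2): `H(p) = Σ_x p(x) log₂ (1/p(x))`. -/
noncomputable def shannon {α : Type*} (p : α → ℝ≥0∞) : ℝ≥0∞ :=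
  ∑' x, p x * log2 (p x)⁻¹

/-- Rényi entropy of order `a ∈ [0,∞]` (base 2):
`H_a(p) = (1/(1−a)) log₂ Σ_{x ∈ supp(p)} p(x)^a` for `a ∉ {1,∞}` (for `a > 1` this is
written in the equivalent form `(1/(a−1)) log₂ (Σ_{x ∈ supp(p)} p(x)^a)⁻¹` so that it is
nonnegative), Shannon entropy for `a = 1`, and `−log₂ max_x p(x)` for `a = ∞`. -/
noncomputable def renyi {α : Type*} (p : α → ℝ≥0∞) (a : ℝ≥0∞) : ℝ≥0∞ :=
  if a = 1 then shannon p
  else if a = ∞ then log2 (⨆ x, p x)⁻¹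
  else if a < 1 then log2 (∑' x, if p x = 0 then 0 else p x ^ a.toReal) * (1 - a)⁻¹
  else log2 (∑' x, if p x = 0 then 0 else p x ^ a.toReal)⁻¹ * (a - 1)⁻¹

/-- `q ∈ Γ̃(S)`: `q` (a pmf over `ℕ`, without loss of generality) is an underlying
distribution of a coupling of `S`, i.e. `q ⊑ p` for every `p ∈ S`. -/
def UnderlyingCoupling {α : Type*} (S : Set (α → ℝ≥0∞)) (q : ℕ → ℝ≥0∞) : Prop :=
  IsPMF q ∧ ∀ p ∈ S, Agg q p

/-- `H*_a(S) = inf_{q ∈ Γ̃(S)} H_a(q)`, the minimum Rényi entropy of couplings of `S`. -/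
noncomputable def minRenyi {α : Type*} (S : Set (α → ℝ≥0∞)) (a : ℝ≥0∞) : ℝ≥0∞ :=
  ⨅ (q : ℕ → ℝ≥0∞) (_ : UnderlyingCoupling S q), renyi q a

/-- The marginal pmf of the first coordinate of a joint pmf. -/
noncomputable def marginalFst {α β : Type*} (p : α × β → ℝ≥0∞) : α → ℝ≥0∞ :=
  fun x => ∑' y, p (x, y)

/-- The conditional pmf `p_{Y|X=x}` of a joint pmf. -/
noncomputable def condSnd {α β : Type*} (p : α × β → ℝ≥0∞) (x : α) : β → ℝ≥0∞ :=
  fun y => p (x, y) / marginalFst p x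

/-! Conditioning on `X = x` rescales the row `y ↦ p_{X,Y}(x, y)` by `p_X(x)` and `topk` is
homogeneous, so the hypothesis says that each row of `p_{X,Y}` is majorized by the corresponding
row of `p_{X̃,Ỹ}`. A set `A` of `k` points of `α × β` splits into rows `A_x`, the mass of `A_x` is
at most the top-`|A_x|` mass of row `x` of `p_{X̃,Ỹ}`, and choosing `|A_x|` points in every row
`x` gives at most `k` points of `α × β'` in total. -/

lemma _root_.ENNReal.finsetSum_iSup_le {ι : Type*} {κ : ι → Type*} [∀ i, Nonempty (κ i)]
    {s : Finset ι} {f : ∀ i, κ i → ℝ≥0∞} {a : ℝ≥0∞}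
    (h : ∀ σ : ∀ i, κ i, ∑ i ∈ s, f i (σ i) ≤ a) : ∑ i ∈ s, ⨆ j, f i j ≤ a := by
  simp_rw [← (Function.surjective_eval _).iSup_comp (g := f _)]
  -- choices can be improved coordinatewise, so the family of choice sums is directed
  rw [ENNReal.finsetSum_iSup fun σ τ =>
    ⟨fun i => if f i (σ i) ≤ f i (τ i) then τ i else σ i, fun i => by
      simp only [Function.eval]
      split_ifs with hi
      · exact ⟨hi, le_rfl⟩
      · exact ⟨le_rfl, (not_le.mp hi).le⟩⟩]
  exact iSup_le h

section topk

variable {α β β' : Type*}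

lemma sum_le_topk (p : α → ℝ≥0∞) {k : ℕ} {A : Finset α} (hA : A.card ≤ k) :
    ∑ x ∈ A, p x ≤ topk p k :=
  le_iSup₂_of_le A hA le_rfl

lemma topk_mono (p : α → ℝ≥0∞) : Monotone (topk p) := fun _ _ hjk =>
  iSup₂_mono' fun A hA => ⟨A, hA.trans hjk, le_rfl⟩

lemma topk_const_mul (c : ℝ≥0∞) (p : α → ℝ≥0∞) (k : ℕ) :
    topk (fun x => c * p x) k = c * topk p k := by
  simp only [topk, ENNReal.mul_iSup, Finset.mul_sum]

lemma topk_eq_iSup_subtype (p : α → ℝ≥0∞) (k : ℕ) :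
    topk p k = ⨆ A : {A : Finset α // A.card ≤ k}, ∑ x ∈ A.1, p x :=
  iSup_subtype'

lemma sum_topk_curry_le_topk (p : α × β → ℝ≥0∞) (s : Finset α) (κ : α → ℕ) :
    ∑ x ∈ s, topk (Function.curry p x) (κ x) ≤ topk p (∑ x ∈ s, κ x) := by
  simp_rw [topk_eq_iSup_subtype (Function.curry p _)]
  have (x : α) : Nonempty {B : Finset β // B.card ≤ κ x} := ⟨⟨∅, Nat.zero_le _⟩⟩
  refine ENNReal.finsetSum_iSup_le fun B => ?_
  set r := s.biUnion fun x => (B x).1.image (Prod.mk x)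
  have hr : ∀ z : α × β, z ∈ r ↔ z.1 ∈ s ∧ z.2 ∈ (B z.1).1 := fun z => by
    simp only [r, Finset.mem_biUnion, Finset.mem_image]
    aesop
  have hcard : r.card ≤ ∑ x ∈ s, κ x := by
    rw [Finset.card_eq_sum_ones, Finset.sum_finset_product r s (fun x => (B x).1) hr]
    simpa using Finset.sum_le_sum fun x _ => (B x).2
  calc ∑ x ∈ s, ∑ y ∈ (B x).1, Function.curry p x y = ∑ z ∈ r, p z :=
        (Finset.sum_finset_product r s (fun x => (B x).1) hr).symm
    _ ≤ topk p (∑ x ∈ s, κ x) := sum_le_topk p hcard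

theorem majorized_of_majorized_curry (p : α × β → ℝ≥0∞) (p' : α × β' → ℝ≥0∞)
    (h : ∀ x, Majorized (Function.curry p x) (Function.curry p' x)) : Majorized p p' := by
  intro k
  refine iSup₂_le fun A hA => ?_
  set s := A.image Prod.fst
  set t : α → Finset β := fun x => A.preimage (Prod.mk x) (Prod.mk_right_injective x).injOn
  have hA_eq : ∀ z : α × β, z ∈ A ↔ z.1 ∈ s ∧ z.2 ∈ t z.1 := fun z => by
    simpa [s, t] using fun hz => ⟨z.2, hz⟩
  have hcard : ∑ x ∈ s, (t x).card = A.card := by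
    simp only [Finset.card_eq_sum_ones A, Finset.sum_finset_product A s t hA_eq, Finset.sum_const,
      smul_eq_mul, mul_one]
  calc ∑ z ∈ A, p z = ∑ x ∈ s, ∑ y ∈ t x, Function.curry p x y :=
        Finset.sum_finset_product A s t hA_eq
    _ ≤ ∑ x ∈ s, topk (Function.curry p x) (t x).card :=
        Finset.sum_le_sum fun x _ => sum_le_topk _ le_rfl
    _ ≤ ∑ x ∈ s, topk (Function.curry p' x) (t x).card :=
        Finset.sum_le_sum fun x _ => h x _
    _ ≤ topk p' (∑ x ∈ s, (t x).card) := sum_topk_curry_le_topk p' s _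
    _ ≤ topk p' k := topk_mono p' (hcard ▸ hA)

end topk

section conditional

variable {α β β' : Type*}

lemma IsPMF.marginalFst_ne_top {p : α × β → ℝ≥0∞} (hp : IsPMF p) (x : α) :
    marginalFst p x ≠ ∞ := by
  refine ne_top_of_le_ne_top ENNReal.one_ne_top ?_
  calc marginalFst p x ≤ ∑' x, marginalFst p x := ENNReal.le_tsum x
    _ = 1 := by rw [← hp, ENNReal.tsum_prod']; rfl

lemma marginalFst_mul_condSnd (p : α × β → ℝ≥0∞) {x : α} (hx : marginalFst p x ≠ ∞) (y : β) :
    marginalFst p x * condSnd p x y = p (x, y) := by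
  by_cases h0 : marginalFst p x = 0
  · have : p (x, y) ≤ marginalFst p x := ENNReal.le_tsum y
    simp_all
  · exact ENNReal.mul_div_cancel h0 hx

theorem majorized_curry_of_majorized_condSnd (p : α × β → ℝ≥0∞) (p' : α × β' → ℝ≥0∞) {x : α}
    (hx : marginalFst p x ≠ ∞) (hmarg : marginalFst p x = marginalFst p' x)
    (h : marginalFst p x ≠ 0 → Majorized (condSnd p x) (condSnd p' x)) :
    Majorized (Function.curry p x) (Function.curry p' x) := by
  intro k
  have hcurry : Function.curry p x = fun y => marginalFst p x * condSnd p x y :=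
    funext fun y => (marginalFst_mul_condSnd p hx y).symm
  have hcurry' : Function.curry p' x = fun y => marginalFst p x * condSnd p' x y :=
    funext fun y => hmarg ▸ (marginalFst_mul_condSnd p' (hmarg ▸ hx) y).symm
  rw [hcurry, hcurry', topk_const_mul, topk_const_mul]
  by_cases h0 : marginalFst p x = 0
  · simp [h0]
  · gcongr
    exact h h0 k

end conditional

theorem joint_majorized_of_cond_majorized_general {α β β' : Type*}
    (pXY : α × β → ℝ≥0∞) (pXY' : α × β' → ℝ≥0∞)
    (hXY : IsPMF pXY)
    (hmarg : marginalFst pXY = marginalFst pXY')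
    (hcond : ∀ x, marginalFst pXY x ≠ 0 → Majorized (condSnd pXY x) (condSnd pXY' x)) :
    Majorized pXY pXY' :=
  majorized_of_majorized_curry pXY pXY' fun x =>
    majorized_curry_of_majorized_condSnd pXY pXY' (hXY.marginalFst_ne_top x)
      (congrFun hmarg x) (hcond x)

/-- Proposition 2, majorization part: if `p_X = p_X̃` and
`p_{Y|X=x} ⪯ p_{Ỹ|X̃=x}` for all `x` (in the support), then `p_{X,Y} ⪯ p_{X̃,Ỹ}`. -/
theorem joint_majorized_of_cond_majorized {α β β' : Type*}
    [Countable α] [Countable β] [Countable β']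
    (pXY : α × β → ℝ≥0∞) (pXY' : α × β' → ℝ≥0∞)
    (hXY : IsPMF pXY) (hXY' : IsPMF pXY')
    (hmarg : marginalFst pXY = marginalFst pXY')
    (hcond : ∀ x, marginalFst pXY x ≠ 0 → Majorized (condSnd pXY x) (condSnd pXY' x)) :
    Majorized pXY pXY' :=
  joint_majorized_of_cond_majorized_general pXY pXY' hXY hmarg hcond

end MEC
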